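/- arXiv:1509.07533 — 2 statements merged into one kernel-verified Lean document; each statement's English description precedes it below -/
import Mathlib

section
/- Every finite sequence (a_1, …, a_n) of real numbers (n ≥ 1) can be partitioned into consecutive blocks S_1, …, S_m, each a slice, such that the sequence (s_1, …, s_m) of slice-weights is U-shaped (i.e. no interior index j with 1 < j < m has s_j ≥ s_{j−1} and s_j ≥ s_{j+1}). -/
/-- Condition (ASC): all even-length initial alternating sums are ≤ 0. -/
def ASC (l : List ℝ) : Prop :=
  ∀ k : ℕ, 1 ≤ k → 2 * k ≤ l.length → (l.take (2 * k)).alternatingSum ≤ 0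

/-- A slice: odd length, and both the sequence and its reverse satisfy (ASC). -/
def IsSlice (l : List ℝ) : Prop := Odd l.length ∧ ASC l ∧ ASC l.reverse

/-- An ev-sequence: even length, satisfying (ASC). -/
def IsEvSeq (l : List ℝ) : Prop := Even l.length ∧ ASC l

/-- (s_1,…,s_m) is U-shaped: no interior (weak) relative maxima. -/
def UShaped (s : List ℝ) : Prop :=
  ∀ j : ℕ, 0 < j → j + 1 < s.length →
    (s.getD j 0 < s.getD (j + 1) 0 ∨ s.getD j 0 < s.getD (j - 1) 0)

lemma altSum_append_odd {l m : List ℝ} (h : Odd l.length) :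
    (l ++ m).alternatingSum = l.alternatingSum - m.alternatingSum := by
  rw [List.alternatingSum_append, h.neg_one_pow]
  simp [sub_eq_add_neg]

lemma altSum_append_even {l m : List ℝ} (h : Even l.length) :
    (l ++ m).alternatingSum = l.alternatingSum + m.alternatingSum := by
  rw [List.alternatingSum_append, h.neg_one_pow]
  simp

lemma altSum_reverse_odd {l : List ℝ} (h : Odd l.length) :
    l.reverse.alternatingSum = l.alternatingSum := by
  rw [List.alternatingSum_reverse, (h.add_one).neg_one_pow, one_smul]

lemma altSum_reverse_even {l : List ℝ} (h : Even l.length) :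
    l.reverse.alternatingSum = -l.alternatingSum := by
  rw [List.alternatingSum_reverse, (h.add_one).neg_one_pow, neg_one_smul]

lemma IsSlice.reverse {l : List ℝ} (h : IsSlice l) : IsSlice l.reverse :=
  ⟨by simpa using h.1, h.2.2, by simpa using h.2.1⟩

/-- Odd suffixes of a slice have alternating sum ≥ the slice's weight. -/
lemma take_ge_of_slice {T : List ℝ} (hT : IsSlice T) {r : ℕ} (hr : Odd r)
    (hrT : r ≤ T.length) : T.alternatingSum ≤ (T.take r).alternatingSum := by
  have hsplit : T = T.take r ++ T.drop r := (List.take_append_drop r T).symm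
  have hlen : (T.take r).length = r := by simp [hrT]
  have hdroplen : (T.drop r).length = T.length - r := by simp
  have hdrop : 0 ≤ (T.drop r).alternatingSum := by
    rcases Nat.eq_or_lt_of_le hrT with h | h
    · simp [h]
    · -- T.length - r is even and positive
      have heven : Even (T.length - r) := by
        rcases hT.1 with ⟨a, ha⟩; rcases hr with ⟨b, hb⟩
        exact ⟨a - b, by omega⟩
      rcases heven with ⟨k, hk⟩
      have hk1 : 1 ≤ k := by omega
      have := hT.2.2 k hk1 (by simp; omega)
      rw [(by omega : 2 * k = T.length - r)] at this
      rw [List.take_reverse, (by omega : T.length - (T.length - r) = r)] at this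
      have hrev : (T.drop r).reverse.alternatingSum = -(T.drop r).alternatingSum :=
        altSum_reverse_even (by rw [hdroplen]; exact ⟨(T.length - r)/2, by omega⟩)
      rw [hrev] at this
      linarith
  calc T.alternatingSum = (T.take r ++ T.drop r).alternatingSum := by rw [← hsplit]
    _ = (T.take r).alternatingSum - (T.drop r).alternatingSum := by
        exact altSum_append_odd (by rwa [hlen])
    _ ≤ (T.take r).alternatingSum := by linarith

lemma ASC_merge {S T U : List ℝ} (hS : IsSlice S) (hT : IsSlice T) (hU : IsSlice U)
    (hST : S.alternatingSum ≤ T.alternatingSum) : ASC (S ++ T ++ U) := by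
  intro k hk hlen
  set n := 2 * k with hn
  have hSlen := hS.1
  have hTlen := hT.1
  rw [List.append_assoc] at *
  rcases lt_or_ge n S.length with h1 | h1
  · rw [List.take_append_of_le_length (le_of_lt h1)]
    have := hS.2.1 k hk (by omega)
    simpa using this
  · rcases le_or_gt n (S.length + T.length) with h2 | h2
    · -- prefix is S ++ (odd part of T)
      have hr : n - S.length ≤ T.length := by omega
      rw [List.take_append, List.take_of_length_le h1,
        List.take_append_of_le_length hr]
      rw [altSum_append_odd (by simpa [hr] using hSlen)]
      have hrodd : Odd (n - S.length) := by
        rcases hSlen with ⟨a, ha⟩; exact ⟨k - a - 1, by omega⟩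
      have := take_ge_of_slice hT hrodd hr
      linarith
    · -- prefix is S ++ T ++ (even part of U)
      have hm : n - S.length - T.length ≤ U.length := by
        simp only [List.length_append] at hlen; omega
      rw [List.take_append, List.take_of_length_le h1,
        List.take_append, List.take_of_length_le (by omega),
        ← List.append_assoc]
      have hSTlen : Even (S ++ T).length := by
        rcases hSlen with ⟨a, ha⟩; rcases hTlen with ⟨b, hb⟩
        simp only [List.length_append]
        exact ⟨a + b + 1, by omega⟩
      rw [altSum_append_even hSTlen, altSum_append_odd hSlen]
      have hmeven : Even (n - S.length - T.length) := by
        rcases hSlen with ⟨a, ha⟩; rcases hTlen with ⟨b, hb⟩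
        exact ⟨k - a - b - 1, by omega⟩
      rcases hmeven with ⟨j, hj⟩
      have hU2 : (U.take (n - S.length - T.length)).alternatingSum ≤ 0 := by
        rcases Nat.eq_zero_or_pos j with hj0 | hj0
        · simp [hj, hj0]
        · have := hU.2.1 j hj0 (by omega)
          rwa [(by omega : 2 * j = n - S.length - T.length)] at this
      linarith

lemma IsSlice.merge {S T U : List ℝ} (hS : IsSlice S) (hT : IsSlice T) (hU : IsSlice U)
    (h1 : S.alternatingSum ≤ T.alternatingSum)
    (h2 : U.alternatingSum ≤ T.alternatingSum) : IsSlice (S ++ T ++ U) := by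
  refine ⟨?_, ASC_merge hS hT hU h1, ?_⟩
  · rcases hS.1 with ⟨a, ha⟩; rcases hT.1 with ⟨b, hb⟩; rcases hU.1 with ⟨c, hc⟩
    simp only [List.length_append]
    exact ⟨a + b + c + 1, by omega⟩
  · have : (S ++ T ++ U).reverse = U.reverse ++ T.reverse ++ S.reverse := by
      simp [List.reverse_append, List.append_assoc]
    rw [this]
    exact ASC_merge hU.reverse hT.reverse hS.reverse
      (by rw [altSum_reverse_odd hU.1, altSum_reverse_odd hT.1]; exact h2)

lemma flatten_map_singleton (a : List ℝ) : (a.map fun x => [x]).flatten = a := by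
  induction a with
  | nil => rfl
  | cons x t iht => simp [iht]

lemma key_induction : ∀ n (S : List (List ℝ)), S.length ≤ n → (∀ s ∈ S, IsSlice s) →
    ∃ S' : List (List ℝ), S'.flatten = S.flatten ∧ (∀ s ∈ S', IsSlice s) ∧
      UShaped (S'.map List.alternatingSum) := by
  intro n
  induction n with
  | zero =>
    intro S hlen hslice
    refine ⟨S, rfl, hslice, ?_⟩
    intro j hj hjlen
    simp at hjlen
    omega
  | succ n ih =>
    intro S hlen hslice
    by_cases hU : UShaped (S.map List.alternatingSum)
    · exact ⟨S, rfl, hslice, hU⟩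
    · unfold UShaped at hU
      push_neg at hU
      obtain ⟨j, hj0, hjlen, hnext, hprev⟩ := hU
      rw [List.length_map] at hjlen
      -- i := j - 1
      obtain ⟨i, rfl⟩ : ∃ i, j = i + 1 := ⟨j - 1, by omega⟩
      have hi2 : i + 2 < S.length := hjlen
      have hw1 : (S[i]).alternatingSum ≤ (S[i+1]).alternatingSum := by
        have := hprev
        rwa [(by omega : i + 1 - 1 = i),
          List.getD_eq_getElem _ _ (by simpa using by omega : i + 1 < (S.map List.alternatingSum).length),
          List.getD_eq_getElem _ _ (by simp; omega),
          List.getElem_map, List.getElem_map] at this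
      have hw2 : (S[i+2]).alternatingSum ≤ (S[i+1]).alternatingSum := by
        have := hnext
        rwa [List.getD_eq_getElem _ _ (by simp; omega),
          List.getD_eq_getElem _ _ (by simp; omega),
          List.getElem_map, List.getElem_map] at this
      have hSeq : S = S.take i ++ S[i] :: S[i+1] :: S[i+2] :: S.drop (i+3) := by
        conv_lhs => rw [← List.take_append_drop i S]
        rw [List.drop_eq_getElem_cons (by omega), List.drop_eq_getElem_cons (by omega),
          List.drop_eq_getElem_cons (by omega)]
      set M : List ℝ := S[i] ++ S[i+1] ++ S[i+2] with hM
      have hMslice : IsSlice M :=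
        IsSlice.merge (hslice _ (List.getElem_mem _)) (hslice _ (List.getElem_mem _))
          (hslice _ (List.getElem_mem _)) hw1 hw2
      set S' : List (List ℝ) := S.take i ++ M :: S.drop (i+3) with hS'
      have hS'len : S'.length ≤ n := by
        rw [hS', List.length_append, List.length_cons, List.length_take, List.length_drop]
        omega
      have hS'slice : ∀ s ∈ S', IsSlice s := by
        intro s hs
        rw [hS'] at hs
        rcases List.mem_append.1 hs with h | h
        · exact hslice _ (List.mem_of_mem_take h)
        · rcases List.mem_cons.1 h with h | h
          · rw [h]; exact hMslice
          · exact hslice _ (List.mem_of_mem_drop h)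
      have hflat : S'.flatten = S.flatten := by
        conv_rhs => rw [hSeq]
        simp only [hS', hM, List.flatten_append, List.flatten_cons, List.append_assoc]
      obtain ⟨S'', h1, h2, h3⟩ := ih S' hS'len hS'slice
      exact ⟨S'', by rw [h1, hflat], h2, h3⟩

/-- Every nonempty finite sequence can be partitioned into slices whose
slice-weight sequence is U-shaped. -/
theorem exists_U_shaped_slice_partition (a : List ℝ) (ha : a ≠ []) :
    ∃ S : List (List ℝ), S.flatten = a ∧ (∀ s ∈ S, IsSlice s) ∧
      UShaped (S.map List.alternatingSum) := by
  have hsingle : ∀ s ∈ a.map (fun x => [x]), IsSlice s := by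
    intro s hs
    rw [List.mem_map] at hs
    obtain ⟨x, -, rfl⟩ := hs
    refine ⟨⟨0, rfl⟩, ?_, ?_⟩ <;> · intro k hk hlen; simp at hlen; omega
  obtain ⟨S, h1, h2, h3⟩ := key_induction (a.map (fun x => [x])).length
    (a.map (fun x => [x])) le_rfl hsingle
  refine ⟨S, ?_, h2, h3⟩
  rw [h1, flatten_map_singleton]
end

section
/- If n is odd, then for any sequence (a_1, …, a_n) of real numbers, some cyclic permutation of (a_1, …, a_n) is a slice. -/
/-!
Extend `a` periodically to `x : ℕ → ℝ` and let `S j` be the alternating sum of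
`x 0, …, x (j - 1)`. As the period `n` is odd, `S (n + j) = S n - S j`, so `S` has period `2n`.
Take `p` with `S (2p)` maximal. The rotation of `a` starting at `2p` has even prefix sums
`S (2p + 2m) - S (2p) ≤ 0`, and its reverse has even prefix sums
`S (2p + n) - S (2p + n - 2m) = S (2 (p + n - m)) - S (2p) ≤ 0`.
-/

open List Function

section AlternatingPrefixSum

variable {G : Type*} [AddCommGroup G]

def altPrefixSum (x : ℕ → G) (j : ℕ) : G := ((range j).map x).alternatingSum

theorem alternatingSum_map_range_add (x : ℕ → G) (k j : ℕ) :
    ((range j).map fun i => x (k + i)).alternatingSum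
      = (-1 : ℤ) ^ k • (altPrefixSum x (k + j) - altPrefixSum x k) := by
  have hsplit : altPrefixSum x (k + j)
      = altPrefixSum x k + (-1 : ℤ) ^ k • ((range j).map fun i => x (k + i)).alternatingSum := by
    simp only [altPrefixSum, range_add, map_append, map_map, alternatingSum_append, length_map,
      length_range]
    rfl
  rw [hsplit, add_sub_cancel_left, smul_smul, ← pow_add, Even.neg_one_pow ⟨k, rfl⟩, one_smul]

variable {x : ℕ → G} {n : ℕ}

theorem altPrefixSum_add_period (hx : Periodic x n) (hn : Odd n) (j : ℕ) :
    altPrefixSum x (n + j) = altPrefixSum x n - altPrefixSum x j := by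
  have hshift : ((range j).map fun i => x (n + i)) = (range j).map x :=
    map_congr_left fun i _ => by rw [add_comm, hx]
  have hj : altPrefixSum x j = -(altPrefixSum x (n + j) - altPrefixSum x n) := by
    rw [← neg_one_zsmul, ← hn.neg_one_pow, ← alternatingSum_map_range_add, hshift, altPrefixSum]
  rw [hj]
  abel

theorem altPrefixSum_add_two_mul_period (hx : Periodic x n) (hn : Odd n) (j : ℕ) :
    altPrefixSum x (2 * n + j) = altPrefixSum x j := by
  rw [two_mul, add_assoc, altPrefixSum_add_period hx hn, altPrefixSum_add_period hx hn,
    sub_sub_cancel]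

theorem exists_forall_altPrefixSum_two_mul_le [LinearOrder G] (hx : Periodic x n) (hn : Odd n) :
    ∃ p, ∀ q, altPrefixSum x (2 * q) ≤ altPrefixSum x (2 * p) := by
  have hper : Periodic (fun q => altPrefixSum x (2 * q)) n := fun q => by
    simp only [mul_add, add_comm _ (2 * n), altPrefixSum_add_two_mul_period hx hn]
  obtain ⟨p, -, hp⟩ := (Finset.range n).exists_max_image (fun q => altPrefixSum x (2 * q))
    ⟨0, Finset.mem_range.2 hn.pos⟩
  exact ⟨p, fun q => hper.map_mod_nat q ▸ hp _ (Finset.mem_range.2 (Nat.mod_lt q hn.pos))⟩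

end AlternatingPrefixSum

namespace List

theorem drop_map_range {α : Type*} (f : ℕ → α) (n d : ℕ) :
    ((range n).map f).drop d = (range (n - d)).map fun i => f (d + i) := by
  rw [← map_drop, range_eq_range', drop_range', range'_eq_map_range, map_map]
  simp [Function.comp_def]

theorem rotate_eq_map_range {α : Type*} (l : List α) (k : ℕ) (d : α) :
    l.rotate k = (range l.length).map fun i => l.getD ((k + i) % l.length) d := by
  refine ext_getElem (by simp) fun i h₁ h₂ => ?_
  simp only [getElem_rotate, getElem_map, getElem_range, add_comm k i]
  rw [getD_eq_getElem]

theorem alternatingSum_reverse_of_even {G : Type*} [AddCommGroup G] {l : List G}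
    (hl : Even l.length) : l.reverse.alternatingSum = -l.alternatingSum := by
  rw [alternatingSum_reverse, hl.add_one.neg_one_pow, neg_one_zsmul]

end List

section Slice

variable {x : ℕ → ℝ} {p : ℕ}

theorem asc_map_range_of_forall_le (hp : ∀ q, altPrefixSum x (2 * q) ≤ altPrefixSum x (2 * p))
    (n : ℕ) : ASC ((range n).map fun i => x (2 * p + i)) := by
  intro m _ hm
  rw [← map_take, take_range, min_eq_left (by simpa using hm), alternatingSum_map_range_add,
    (even_two_mul p).neg_one_pow, one_smul, sub_nonpos, ← mul_add]
  exact hp (p + m)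

theorem asc_reverse_map_range_of_forall_le {n : ℕ} (hx : Periodic x n) (hn : Odd n)
    (hp : ∀ q, altPrefixSum x (2 * q) ≤ altPrefixSum x (2 * p)) :
    ASC ((range n).map fun i => x (2 * p + i)).reverse := by
  intro m _ hm
  simp only [length_reverse, length_map, length_range] at hm
  have hodd : Odd (2 * p + (n - 2 * m)) := (even_two_mul p).add_odd (by
    obtain ⟨t, rfl⟩ := hn; exact ⟨t - m, by omega⟩)
  rw [take_reverse, length_map, length_range, drop_map_range, Nat.sub_sub_self hm,
    alternatingSum_reverse_of_even (by simp)]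
  simp only [← add_assoc]
  rw [alternatingSum_map_range_add, hodd.neg_one_pow, neg_one_zsmul, neg_neg, sub_nonpos,
    ← altPrefixSum_add_two_mul_period hx hn (2 * p + (n - 2 * m)),
    show 2 * p + (n - 2 * m) + 2 * m = n + 2 * p by omega,
    show 2 * n + (2 * p + (n - 2 * m)) = n + 2 * (p + n - m) by omega,
    altPrefixSum_add_period hx hn, altPrefixSum_add_period hx hn, sub_le_sub_iff_left]
  exact hp _

theorem isSlice_map_range_of_forall_le {n : ℕ} (hx : Periodic x n) (hn : Odd n)
    (hp : ∀ q, altPrefixSum x (2 * q) ≤ altPrefixSum x (2 * p)) :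
    IsSlice ((range n).map fun i => x (2 * p + i)) :=
  ⟨by simpa using hn, asc_map_range_of_forall_le hp n,
    asc_reverse_map_range_of_forall_le hx hn hp⟩

end Slice

/-- For odd n, some cyclic permutation of any sequence (a_1,…,a_n) is a slice. -/
theorem odd_cyclic_permutation_slice (a : List ℝ) (h : Odd a.length) :
    ∃ k : ℕ, k < a.length ∧ IsSlice (a.drop k ++ a.take k) := by
  set x : ℕ → ℝ := fun i => a.getD (i % a.length) 0
  have hx : Periodic x a.length := fun i => by simp [x]
  obtain ⟨p, hp⟩ := exists_forall_altPrefixSum_two_mul_le hx h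
  have hk : 2 * p % a.length < a.length := Nat.mod_lt _ h.pos
  refine ⟨2 * p % a.length, hk, ?_⟩
  rw [← rotate_eq_drop_append_take hk.le, rotate_mod, rotate_eq_map_range a _ 0]
  exact isSlice_map_range_of_forall_le hx h hp
end
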